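/- Suppose π* ≥ 1 satisfies Φ(π*) = c. Then π* = max over t ∈ [T] of sup over d ∈ D of the ratio (∑_{i=1}^t σ(d^i)) / (c + ∑_{i=1}^t (max_{k∈[i]} d_k − d_i)); that is, only the T prefix index sets [t], t ∈ [T], rather than all 2^T subsets of [T], are needed to compute the best possible competitive ratio π*. -/

import Mathlib

/-!
Write `a_t(d) = d_t − max_{k ≤ t} d_k + σ(d^t)/π` for the unclipped output, so that
`δ_t(π, d) = [a_t(d)]⁺`. Slot `i ≤ t` cannot tell `d` from `d^t`, so `δ_i(π, d) = δ_i(π, d^t)`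
and `Φ(π) ≤ c` gives `∑_{i ≤ t} a_i(d) ≤ c` for every prefix: this is exactly
"prefix ratio `≤ π`".

Conversely, take `d` with `∑_t δ_t(π, d)` close to `c`, keep only the slots `A` where
`a_t(d) ≥ 0`, move them in order to the front and fill the remaining slots with `dlo`.
Every running maximum of `d` is attained in `A`, so on the compressed profile each kept slot
sees a running maximum no larger than before, and its reference profile is a permutation of
`d^t` with some entries below the peak lowered to `dlo`, which cannot decrease `σ`. Hence the
first `|A|` unclipped outputs of the compressed profile sum to at least `∑_t δ_t(π, d)`, and
its prefix ratio is close to `π`.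
-/

open Finset MeasureTheory

noncomputable section

/-- A discharging vector `δ` is feasible for demand profile `d` (with capacity `c`
and per-slot limit `dmax`). -/
def Feasible {T : ℕ} (c dmax : ℝ) (d δ : Fin T → ℝ) : Prop :=
  (∑ t, δ t) ≤ c ∧ ∀ t, 0 ≤ δ t ∧ δ t ≤ min dmax (d t)

/-- Peak-demand reduction `R(d, δ)`. -/
noncomputable def Red {T : ℕ} (d δ : Fin T → ℝ) : ℝ :=
  (⨆ t, d t) - ⨆ t, (d t - δ t)

/-- Offline optimal peak-demand reduction `σ(d)`. -/
noncomputable def offOpt {T : ℕ} (c dmax : ℝ) (d : Fin T → ℝ) : ℝ :=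
  sSup {r | ∃ δ : Fin T → ℝ, Feasible c dmax d δ ∧ r = Red d δ}

/-- Prefix maximum `max_{k ∈ [t]} d_k`. -/
noncomputable def prefMax {T : ℕ} (d : Fin T → ℝ) (t : Fin T) : ℝ :=
  ⨆ k : {k : Fin T // k ≤ t}, d k.1

/-- The uncertainty set `D`: all profiles with entries in `[dlo, dhi]`. -/
def inD {T : ℕ} (dlo dhi : ℝ) (d : Fin T → ℝ) : Prop :=
  ∀ t, dlo ≤ d t ∧ d t ≤ dhi

/-- Reference profile `d^t`: observed demands up to slot `t`, lowest demand `dlo` afterwards. -/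
def ref {T : ℕ} (dlo : ℝ) (d : Fin T → ℝ) (t : Fin T) : Fin T → ℝ :=
  fun k => if k ≤ t then d k else dlo

/-- Output of `pCR-PRM(π)` at slot `t`:
`δ_t(π, d) = [d_t − max_{k∈[t]} d_k + σ(d^t)/π]⁺`. -/
noncomputable def pcr {T : ℕ} (c dmax dlo : ℝ) (π : ℝ) (d : Fin T → ℝ) (t : Fin T) : ℝ :=
  max (d t - prefMax d t + offOpt c dmax (ref dlo d t) / π) 0

/-- Inventory function `Φ(π) = sup_{d ∈ D} ∑_t δ_t(π, d)`. -/
noncomputable def Phi (T : ℕ) (c dmax dlo dhi : ℝ) (π : ℝ) : ℝ :=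
  sSup {s | ∃ d : Fin T → ℝ, inD dlo dhi d ∧ s = ∑ t, pcr c dmax dlo π d t}

lemma eq_ciSup_csSup_of_forall_le_of_forall_lt {ι : Type*} [Nonempty ι] {S : ι → Set ℝ} {x : ℝ}
    (hne : ∀ i, (S i).Nonempty) (hle : ∀ i, ∀ r ∈ S i, r ≤ x)
    (hlt : ∀ y < x, ∃ i, ∃ r ∈ S i, y < r) : x = ⨆ i, sSup (S i) := by
  have hsup : ∀ i, sSup (S i) ≤ x := fun i => csSup_le (hne i) (hle i)
  refine le_antisymm (le_of_forall_lt fun y hy => ?_) (ciSup_le hsup)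
  obtain ⟨i, r, hr, hyr⟩ := hlt y hy
  exact hyr.trans_le ((le_csSup ⟨x, hle i⟩ hr).trans
    (le_ciSup ⟨x, by rintro _ ⟨j, rfl⟩; exact hsup j⟩ i))

lemma exists_perm_prefix_orderIso {T : ℕ} (A : Finset (Fin T)) :
    ∃ e : Equiv.Perm (Fin T), (∀ k : Fin T, (k : ℕ) < #A ↔ e k ∈ A) ∧
      ∀ j k : Fin T, (j : ℕ) < #A → (k : ℕ) < #A → (e j ≤ e k ↔ j ≤ k) := by
  classical
  let f : {k : Fin T // (k : ℕ) < #A} ≃o A :=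
    (Fin.castLEOrderIso (by simpa using card_le_univ A)).symm.trans (A.orderIsoOfFin rfl)
  refine ⟨f.toEquiv.extendSubtype, fun k => ⟨fun hk => Equiv.extendSubtype_mem _ k hk,
    fun hk => not_not.1 fun h => Equiv.extendSubtype_not_mem _ k h hk⟩, fun j k hj hk => ?_⟩
  rw [Equiv.extendSubtype_apply_of_mem _ j hj, Equiv.extendSubtype_apply_of_mem _ k hk]
  exact Subtype.coe_le_coe.trans f.le_iff_le

section OffOpt

variable {T : ℕ} {c dmax : ℝ}

lemma red_le_of_feasible [Nonempty (Fin T)] {d δ : Fin T → ℝ} (h : Feasible c dmax d δ) :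
    Red d δ ≤ dmax := by
  obtain ⟨t, ht⟩ := exists_eq_ciSup_of_finite (f := d)
  have hres : d t - δ t ≤ ⨆ s, (d s - δ s) :=
    le_ciSup (Finite.bddAbove_range fun s => d s - δ s) t
  have hδ := (h.2 t).2
  rw [Red, ← ht]
  linarith [min_le_left dmax (d t)]

lemma bddAbove_red [Nonempty (Fin T)] (d : Fin T → ℝ) :
    BddAbove {r | ∃ δ, Feasible c dmax d δ ∧ r = Red d δ} :=
  ⟨dmax, by rintro r ⟨δ, hδ, rfl⟩; exact red_le_of_feasible hδ⟩

lemma zero_mem_red (hc : 0 ≤ c) (hdmax : 0 ≤ dmax) {d : Fin T → ℝ} (hd : 0 ≤ d) :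
    (0 : ℝ) ∈ {r | ∃ δ, Feasible c dmax d δ ∧ r = Red d δ} :=
  ⟨0, ⟨by simpa using hc, fun t => ⟨le_rfl, le_min hdmax (hd t)⟩⟩, by simp [Red]⟩

lemma offOpt_nonneg [Nonempty (Fin T)] (hc : 0 ≤ c) (hdmax : 0 ≤ dmax) {d : Fin T → ℝ}
    (hd : 0 ≤ d) : 0 ≤ offOpt c dmax d :=
  le_csSup (bddAbove_red d) (zero_mem_red hc hdmax hd)

lemma offOpt_le_dmax [Nonempty (Fin T)] (hc : 0 ≤ c) (hdmax : 0 ≤ dmax) {d : Fin T → ℝ}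
    (hd : 0 ≤ d) : offOpt c dmax d ≤ dmax :=
  csSup_le ⟨0, zero_mem_red hc hdmax hd⟩ fun _ ⟨_, hδ, hr⟩ => hr ▸ red_le_of_feasible hδ

lemma feasible_comp_perm {d δ : Fin T → ℝ} (e : Equiv.Perm (Fin T)) :
    Feasible c dmax (d ∘ e) (δ ∘ e) ↔ Feasible c dmax d δ := by
  unfold Feasible
  rw [show ∑ t, (δ ∘ e) t = ∑ t, δ t from Equiv.sum_comp e δ]
  exact and_congr_right' ⟨fun h t => by simpa using h (e.symm t), fun h t => h (e t)⟩

lemma red_comp_perm (d δ : Fin T → ℝ) (e : Equiv.Perm (Fin T)) :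
    Red (d ∘ e) (δ ∘ e) = Red d δ := by
  simp only [Red, Function.comp_apply, e.iSup_comp (g := d), e.iSup_comp (g := fun t => d t - δ t)]

lemma offOpt_comp_perm (d : Fin T → ℝ) (e : Equiv.Perm (Fin T)) :
    offOpt c dmax (d ∘ e) = offOpt c dmax d := by
  unfold offOpt
  congr 1
  ext r
  constructor
  · rintro ⟨δ, hδ, rfl⟩
    have hδe : (δ ∘ e.symm) ∘ e = δ := by ext; simp
    refine ⟨δ ∘ e.symm, (feasible_comp_perm e).1 (by rwa [hδe]), ?_⟩
    rw [← red_comp_perm d _ e, hδe]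
  · rintro ⟨δ, hδ, rfl⟩
    exact ⟨δ ∘ e, (feasible_comp_perm e).2 hδ, (red_comp_perm d δ e).symm⟩

lemma offOpt_le_of_le_of_eq_at_peak [Nonempty (Fin T)] (hc : 0 ≤ c) (hdmax : 0 ≤ dmax)
    {f g : Fin T → ℝ} (hf : 0 ≤ f) (hfg : f ≤ g) {j : Fin T} (hj : f j = g j)
    (hpeak : ∀ k, g k ≤ g j) : offOpt c dmax g ≤ offOpt c dmax f := by
  have hsup_g : (⨆ k, g k) = g j :=
    le_antisymm (ciSup_le hpeak) (le_ciSup (Finite.bddAbove_range g) j)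
  have hsup_f : (⨆ k, f k) = g j :=
    le_antisymm (ciSup_le fun k => (hfg k).trans (hpeak k))
      (hj ▸ le_ciSup (Finite.bddAbove_range f) j)
  refine csSup_le ⟨0, zero_mem_red hc hdmax (hf.trans hfg)⟩ ?_
  rintro r ⟨δ, ⟨hsum, hδ⟩, rfl⟩
  -- Clipping `δ` at `f` keeps it feasible for `f` and does not raise the residual demand.
  set δ' : Fin T → ℝ := fun t => min (δ t) (f t)
  have hfeas : Feasible c dmax f δ' :=
    ⟨(sum_le_sum fun t _ => min_le_left _ _).trans hsum, fun t =>
      ⟨le_min (hδ t).1 (hf t), min_le_min ((hδ t).2.trans (min_le_left _ _)) le_rfl⟩⟩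
  have hres : ∀ t, f t - δ' t ≤ g t - δ t := fun t => by
    have := (hδ t).2.trans (min_le_right _ _)
    rcases le_total (δ t) (f t) with h | h
    · simp only [δ', min_eq_left h]; linarith [hfg t]
    · simp only [δ', min_eq_right h]; linarith
  calc Red g δ ≤ Red f δ' := by
        simp only [Red, hsup_g, hsup_f]
        linarith [ciSup_mono (Finite.bddAbove_range _) hres]
    _ ≤ offOpt c dmax f := le_csSup (bddAbove_red f) ⟨δ', hfeas, rfl⟩

end OffOpt

section PrefMax

variable {T : ℕ} (d : Fin T → ℝ)

lemma le_prefMax {k t : Fin T} (h : k ≤ t) : d k ≤ prefMax d t :=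
  le_ciSup (Finite.bddAbove_range fun k : {k : Fin T // k ≤ t} => d k.1) ⟨k, h⟩

lemma prefMax_le {t : Fin T} {a : ℝ} (h : ∀ k ≤ t, d k ≤ a) : prefMax d t ≤ a :=
  have : Nonempty {k : Fin T // k ≤ t} := ⟨⟨t, le_rfl⟩⟩
  ciSup_le fun k => h k.1 k.2

lemma prefMax_congr {d' : Fin T → ℝ} {t : Fin T} (h : ∀ k ≤ t, d k = d' k) :
    prefMax d t = prefMax d' t :=
  iSup_congr fun k => h k.1 k.2

lemma sum_prefMax_sub_nonneg (s : Finset (Fin T)) : 0 ≤ ∑ i ∈ s, (prefMax d i - d i) :=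
  sum_nonneg fun _ _ => sub_nonneg.2 (le_prefMax d le_rfl)

lemma exists_record_eq_prefMax (t : Fin T) :
    ∃ j ≤ t, d j = prefMax d t ∧ prefMax d j = d j := by
  have : Nonempty {k : Fin T // k ≤ t} := ⟨⟨t, le_rfl⟩⟩
  obtain ⟨⟨j, hjt⟩, hj⟩ := exists_eq_ciSup_of_finite (f := fun k : {k : Fin T // k ≤ t} => d k.1)
  have hj : d j = prefMax d t := hj
  exact ⟨j, hjt, hj, le_antisymm (prefMax_le d fun k hk => hj ▸ le_prefMax d (hk.trans hjt))
    (le_prefMax d le_rfl)⟩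

end PrefMax

section Ref

variable {T : ℕ} {dlo : ℝ}

lemma inD_nonneg {dhi : ℝ} (hdlo : 0 ≤ dlo) {d : Fin T → ℝ} (hd : inD dlo dhi d) : 0 ≤ d :=
  fun t => hdlo.trans (hd t).1

lemma ref_inD {dhi : ℝ} (hbd : dlo ≤ dhi) {d : Fin T → ℝ} (hd : inD dlo dhi d) (t : Fin T) :
    inD dlo dhi (ref dlo d t) := fun k => by
  unfold ref
  split_ifs
  exacts [hd k, ⟨le_rfl, hbd⟩]

lemma ref_nonneg (hdlo : 0 ≤ dlo) {d : Fin T → ℝ} (hd : 0 ≤ d) (t : Fin T) :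
    0 ≤ ref dlo d t := fun k => by
  unfold ref
  split_ifs
  exacts [hd k, hdlo]

lemma ref_ref_of_le (d : Fin T → ℝ) {i t : Fin T} (h : i ≤ t) :
    ref dlo (ref dlo d t) i = ref dlo d i := by
  funext k
  by_cases hk : k ≤ i
  · simp [ref, hk, hk.trans h]
  · simp [ref, hk]

lemma ref_comp_perm {g : Fin T → ℝ} (e : Equiv.Perm (Fin T)) {k : Fin T}
    (h : ∀ j, (j ≤ k ↔ e j ≤ e k) ∨ g (e j) = dlo) :
    ref dlo (g ∘ e) k = ref dlo g (e k) ∘ e := by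
  funext j
  rcases h j with h | h <;> simp [ref, h]

lemma offOpt_ref_le_offOpt_ref_piecewise [Nonempty (Fin T)] {c dmax : ℝ} (hc : 0 ≤ c)
    (hdmax : 0 ≤ dmax) (hdlo : 0 ≤ dlo) {d : Fin T → ℝ} (hd : ∀ k, dlo ≤ d k)
    {A : Finset (Fin T)} [DecidablePred (· ∈ A)] (hA : ∀ j, prefMax d j = d j → j ∈ A)
    (i : Fin T) :
    offOpt c dmax (ref dlo d i) ≤ offOpt c dmax (ref dlo (A.piecewise d fun _ => dlo) i) := by
  obtain ⟨j, hji, hj, hrec⟩ := exists_record_eq_prefMax d i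
  have hmask : ∀ k, A.piecewise d (fun _ => dlo) k ≤ d k := fun k => by
    by_cases hk : k ∈ A <;> simp [hk, hd k]
  refine offOpt_le_of_le_of_eq_at_peak hc hdmax
    (ref_nonneg hdlo (fun k => hdlo.trans ?_) i) (fun k => ?_) (j := j) ?_ (fun k => ?_)
  · by_cases hk : k ∈ A <;> simp [hk, hd k]
  · unfold ref
    split_ifs
    exacts [hmask k, le_rfl]
  · simp [ref, hji, hA j hrec]
  · simp only [ref, if_pos hji, hj]
    split_ifs with hk
    exacts [le_prefMax d hk, (hd i).trans (le_prefMax d le_rfl)]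

end Ref

def pcrRaw {T : ℕ} (c dmax dlo π : ℝ) (d : Fin T → ℝ) (t : Fin T) : ℝ :=
  d t - prefMax d t + offOpt c dmax (ref dlo d t) / π

section Algorithm

variable {T : ℕ} {c dmax dlo dhi π : ℝ}

lemma sum_pcrRaw (d : Fin T → ℝ) (s : Finset (Fin T)) :
    ∑ i ∈ s, pcrRaw c dmax dlo π d i =
      (∑ i ∈ s, offOpt c dmax (ref dlo d i)) / π - ∑ i ∈ s, (prefMax d i - d i) := by
  simp only [pcrRaw, sum_add_distrib, sum_sub_distrib, sum_div]
  ring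

lemma pcrRaw_nonneg_of_record [Nonempty (Fin T)] (hc : 0 ≤ c) (hdmax : 0 ≤ dmax)
    (hdlo : 0 ≤ dlo) (hπ : 0 ≤ π) {d : Fin T → ℝ} (hd : 0 ≤ d) {j : Fin T}
    (hj : prefMax d j = d j) : 0 ≤ pcrRaw c dmax dlo π d j := by
  rw [pcrRaw, hj, sub_self, zero_add]
  exact div_nonneg (offOpt_nonneg hc hdmax (ref_nonneg hdlo hd j)) hπ

lemma pcr_le_dmax [Nonempty (Fin T)] (hc : 0 ≤ c) (hdmax : 0 ≤ dmax) (hdlo : 0 ≤ dlo)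
    (hπ : 1 ≤ π) {d : Fin T → ℝ} (hd : 0 ≤ d) (t : Fin T) : pcr c dmax dlo π d t ≤ dmax := by
  have hσ := offOpt_le_dmax hc hdmax (ref_nonneg hdlo hd t)
  have hσπ := div_le_self (offOpt_nonneg hc hdmax (ref_nonneg hdlo hd t)) hπ
  have hmax := le_prefMax d (le_refl t)
  exact max_le (by linarith) hdmax

lemma pcr_ref_of_le (d : Fin T → ℝ) {i t : Fin T} (h : i ≤ t) :
    pcr c dmax dlo π (ref dlo d t) i = pcr c dmax dlo π d i := by
  have hval : ref dlo d t i = d i := if_pos h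
  have hmax : prefMax (ref dlo d t) i = prefMax d i :=
    prefMax_congr _ fun k hk => if_pos (hk.trans h)
  simp only [pcr, hval, hmax, ref_ref_of_le d h]

lemma sum_pcr_le_Phi [Nonempty (Fin T)] (hc : 0 ≤ c) (hdmax : 0 ≤ dmax) (hdlo : 0 ≤ dlo)
    (hπ : 1 ≤ π) {d : Fin T → ℝ} (hd : inD dlo dhi d) :
    ∑ t, pcr c dmax dlo π d t ≤ Phi T c dmax dlo dhi π := by
  refine le_csSup ⟨(univ : Finset (Fin T)).card • dmax, ?_⟩ ⟨d, hd, rfl⟩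
  rintro _ ⟨d', hd', rfl⟩
  exact sum_le_card_nsmul _ _ _ fun t _ =>
    pcr_le_dmax hc hdmax hdlo hπ (inD_nonneg hdlo hd') t

lemma sum_offOpt_ref_le [Nonempty (Fin T)] (hc : 0 ≤ c) (hdmax : 0 ≤ dmax) (hdlo : 0 ≤ dlo)
    (hbd : dlo ≤ dhi) (hπ : 1 ≤ π) (hΦ : Phi T c dmax dlo dhi π ≤ c) (t : Fin T)
    {d : Fin T → ℝ} (hd : inD dlo dhi d) :
    ∑ i ∈ Iic t, offOpt c dmax (ref dlo d i) ≤ π * (c + ∑ i ∈ Iic t, (prefMax d i - d i)) := by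
  have hsum : ∑ i ∈ Iic t, pcrRaw c dmax dlo π d i ≤ c := calc
    _ ≤ ∑ i ∈ Iic t, pcr c dmax dlo π d i := sum_le_sum fun i _ => le_max_left _ _
    _ = ∑ i ∈ Iic t, pcr c dmax dlo π (ref dlo d t) i :=
      sum_congr rfl fun i hi => (pcr_ref_of_le d (mem_Iic.1 hi)).symm
    _ ≤ ∑ i, pcr c dmax dlo π (ref dlo d t) i :=
      sum_le_sum_of_subset_of_nonneg (subset_univ _) fun i _ _ => le_max_right _ _
    _ ≤ Phi T c dmax dlo dhi π := sum_pcr_le_Phi hc hdmax hdlo hπ (ref_inD hbd hd t)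
    _ ≤ c := hΦ
  rw [sum_pcrRaw, sub_le_iff_le_add, div_le_iff₀ (by linarith)] at hsum
  linarith

lemma prefix_ratio_le [Nonempty (Fin T)] (hc : 0 < c) (hdmax : 0 ≤ dmax) (hdlo : 0 ≤ dlo)
    (hbd : dlo ≤ dhi) (hπ : 1 ≤ π) (hΦ : Phi T c dmax dlo dhi π ≤ c) (t : Fin T)
    {d : Fin T → ℝ} (hd : inD dlo dhi d) :
    (∑ i ∈ Iic t, offOpt c dmax (ref dlo d i)) / (c + ∑ i ∈ Iic t, (prefMax d i - d i)) ≤ π := by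
  rw [div_le_iff₀ (by linarith [sum_prefMax_sub_nonneg d (Iic t)])]
  exact sum_offOpt_ref_le hc.le hdmax hdlo hbd hπ hΦ t hd

lemma pcrRaw_le_pcrRaw_compress [Nonempty (Fin T)] (hc : 0 ≤ c) (hdmax : 0 ≤ dmax)
    (hdlo : 0 ≤ dlo) (hπ : 0 < π) {d : Fin T → ℝ} (hd : ∀ k, dlo ≤ d k)
    {A : Finset (Fin T)} [DecidablePred (· ∈ A)] (hA : ∀ j, prefMax d j = d j → j ∈ A)
    {e : Equiv.Perm (Fin T)} (he_mem : ∀ k : Fin T, (k : ℕ) < #A ↔ e k ∈ A)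
    (he_mono : ∀ j k : Fin T, (j : ℕ) < #A → (k : ℕ) < #A → (e j ≤ e k ↔ j ≤ k))
    {k : Fin T} (hk : (k : ℕ) < #A) :
    pcrRaw c dmax dlo π d (e k) ≤
      pcrRaw c dmax dlo π ((A.piecewise d fun _ => dlo) ∘ e) k := by
  have hval : A.piecewise d (fun _ => dlo) (e k) = d (e k) :=
    piecewise_eq_of_mem _ _ _ ((he_mem k).1 hk)
  have hmax : prefMax ((A.piecewise d fun _ => dlo) ∘ e) k ≤ prefMax d (e k) :=
    prefMax_le _ fun j hj => by
      have hjA : (j : ℕ) < #A := lt_of_le_of_lt (Fin.le_def.1 hj) hk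
      rw [Function.comp_apply, piecewise_eq_of_mem _ _ _ ((he_mem j).1 hjA)]
      exact le_prefMax d ((he_mono j k hjA hk).2 hj)
  have hσ : offOpt c dmax (ref dlo ((A.piecewise d fun _ => dlo) ∘ e) k) =
      offOpt c dmax (ref dlo (A.piecewise d fun _ => dlo) (e k)) := by
    rw [ref_comp_perm e fun j => ?_, offOpt_comp_perm]
    by_cases hj : (j : ℕ) < #A
    · exact Or.inl (he_mono j k hj hk).symm
    · exact Or.inr (piecewise_eq_of_notMem _ _ _ fun h => hj ((he_mem j).2 h))
  have hle := div_le_div_of_nonneg_right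
    (offOpt_ref_le_offOpt_ref_piecewise hc hdmax hdlo hd hA (e k)) hπ.le
  simp only [pcrRaw, Function.comp_apply, hval, hσ]
  linarith

lemma exists_sum_pcr_le_prefix_sum_pcrRaw (hT : 0 < T) (hc : 0 ≤ c) (hdmax : 0 ≤ dmax)
    (hdlo : 0 ≤ dlo) (hbd : dlo ≤ dhi) (hπ : 0 < π) {d : Fin T → ℝ} (hd : inD dlo dhi d) :
    ∃ (t : Fin T) (d' : Fin T → ℝ), inD dlo dhi d' ∧
      ∑ i, pcr c dmax dlo π d i ≤ ∑ k ∈ Iic t, pcrRaw c dmax dlo π d' k := by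
  classical
  have : Nonempty (Fin T) := ⟨⟨0, hT⟩⟩
  set A := univ.filter fun i => 0 ≤ pcrRaw c dmax dlo π d i
  have hA : ∀ j, prefMax d j = d j → j ∈ A := fun j hj => mem_filter.2
    ⟨mem_univ j, pcrRaw_nonneg_of_record hc hdmax hdlo hπ.le (inD_nonneg hdlo hd) hj⟩
  -- the first slot is a record, so `A` is nonempty
  have hA₀ : 0 < #A := card_pos.2 ⟨_, hA ⟨0, hT⟩ (le_antisymm
    (prefMax_le d fun k hk => le_of_eq (congrArg d (Fin.ext (Nat.le_zero.1 hk))))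
    (le_prefMax d le_rfl))⟩
  obtain ⟨e, he_mem, he_mono⟩ := exists_perm_prefix_orderIso A
  set t : Fin T := ⟨#A - 1, by have := card_le_univ A; simp at this; omega⟩
  have hIic : ∀ k, k ∈ Iic t ↔ (k : ℕ) < #A := fun k => by
    rw [mem_Iic, Fin.le_def]; simp only [t]; omega
  refine ⟨t, (A.piecewise d fun _ => dlo) ∘ e, fun k => ?_, ?_⟩
  · by_cases hk : e k ∈ A <;> simp [hk, hd (e k), hbd]
  calc ∑ i, pcr c dmax dlo π d i = ∑ i ∈ A, pcrRaw c dmax dlo π d i := by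
        rw [sum_filter]
        exact sum_congr rfl fun i _ => max_comm _ _ |>.trans (max_def _ _)
    _ = ∑ k ∈ Iic t, pcrRaw c dmax dlo π d (e k) :=
        (sum_equiv e (fun k => (hIic k).trans (he_mem k)) fun _ _ => rfl).symm
    _ ≤ _ := sum_le_sum fun k hk => pcrRaw_le_pcrRaw_compress hc hdmax hdlo hπ
        (fun k => (hd k).1) hA he_mem he_mono ((hIic k).1 hk)

lemma exists_lt_prefix_ratio (hT : 0 < T) (hc : 0 < c) (hdmax : 0 ≤ dmax) (hdlo : 0 ≤ dlo)
    (hbd : dlo ≤ dhi) (hπ : 0 < π) (hΦ : c ≤ Phi T c dmax dlo dhi π) {y : ℝ} (hy : y < π) :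
    ∃ (t : Fin T) (d : Fin T → ℝ), inD dlo dhi d ∧
      y < (∑ i ∈ Iic t, offOpt c dmax (ref dlo d i)) / (c + ∑ i ∈ Iic t, (prefMax d i - d i)) := by
  set ε := c * (π - y) / π
  have hε : 0 < ε := div_pos (mul_pos hc (sub_pos.2 hy)) hπ
  obtain ⟨_, ⟨d, hd, rfl⟩, hlt⟩ := exists_lt_of_lt_csSup
    (s := {s | ∃ d : Fin T → ℝ, inD dlo dhi d ∧ s = ∑ t, pcr c dmax dlo π d t})
    ⟨_, fun _ => dlo, fun _ => ⟨le_rfl, hbd⟩, rfl⟩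
    (show c - ε < Phi T c dmax dlo dhi π by linarith)
  obtain ⟨t, d', hd', hge⟩ := exists_sum_pcr_le_prefix_sum_pcrRaw hT hc.le hdmax hdlo hbd hπ hd
  refine ⟨t, d', hd', ?_⟩
  rw [sum_pcrRaw] at hge
  have hB := sum_prefMax_sub_nonneg d' (Iic t)
  set N := ∑ i ∈ Iic t, offOpt c dmax (ref dlo d' i)
  set B := ∑ i ∈ Iic t, (prefMax d' i - d' i)
  have hN : π * (c - ε + B) < N := by
    have := (lt_div_iff₀ hπ).1 (show c - ε + B < N / π by linarith)
    linarith
  have hπε : π * ε = c * (π - y) := mul_div_cancel₀ _ hπ.ne'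
  rw [lt_div_iff₀ (by linarith)]
  nlinarith [mul_le_mul_of_nonneg_right hy.le hB]

end Algorithm

/-- if `Φ(π*) = c`, only the `T` prefix index sets are needed:
`π* = max_{t∈[T]} sup_{d∈D} (∑_{i=1}^t σ(d^i)) / (c + ∑_{i=1}^t (max_{k∈[i]} d_k − d_i))`. -/
theorem stmt16 (T : ℕ) (hT : 0 < T) (c dmax dlo dhi : ℝ)
    (hc : 0 < c) (hdmax : 0 < dmax) (hdlo : 0 < dlo) (hbd : dlo ≤ dhi)
    (π : ℝ) (hπ : 1 ≤ π) (hΦ : Phi T c dmax dlo dhi π = c) :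
    π = ⨆ t : Fin T, sSup {r | ∃ d : Fin T → ℝ, inD dlo dhi d ∧
      r = (∑ i ∈ Finset.Iic t, offOpt c dmax (ref dlo d i)) /
          (c + ∑ i ∈ Finset.Iic t, (prefMax d i - d i))} := by
  have : Nonempty (Fin T) := ⟨⟨0, hT⟩⟩
  apply eq_ciSup_csSup_of_forall_le_of_forall_lt
  · exact fun t => ⟨_, fun _ => dlo, fun _ => ⟨le_rfl, hbd⟩, rfl⟩
  · rintro t _ ⟨d, hd, rfl⟩
    exact prefix_ratio_le hc hdmax.le hdlo.le hbd hπ hΦ.le t hd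
  · intro y hy
    obtain ⟨t, d, hd, hlt⟩ :=
      exists_lt_prefix_ratio hT hc hdmax.le hdlo.le hbd (by linarith) hΦ.ge hy
    exact ⟨t, _, ⟨d, hd, rfl⟩, hlt⟩
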